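/- Let ζ be defined as in the paper. For all integers n ≥ 1, 0 ≤ k ≤ n-1, and 0 ≤ p ≤ n-k-1, the identity Σ_{j=p+k}^{n} s(n,j)·ζ(j,k,p) = s(n-p, k+1) holds, where s denotes signed Stirling numbers of the first kind. -/
import Mathlib


open Finset

/-- Stirling numbers of the second kind. -/
def S2 : ℕ → ℕ → ℕ
  | 0, 0 => 1
  | 0, _ + 1 => 0
  | _ + 1, 0 => 0
  | n + 1, k + 1 => S2 n k + (k + 1) * S2 n (k + 1)

/-- Signed Stirling numbers of the first kind. -/
def s1 : ℕ → ℕ → ℤ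
  | 0, 0 => 1
  | 0, _ + 1 => 0
  | n + 1, 0 => -(n : ℤ) * s1 n 0
  | n + 1, k + 1 => s1 n k - (n : ℤ) * s1 n (k + 1)

/-- The triple-indexed array ζ(n,k,j) of the paper. -/
def zeta (n k j : ℕ) : ℕ :=
  if j = 0 then (if n = k + 1 then 1 else 0)
  else if j = 1 then Nat.choose (n - 1) (k + 1)
  else ∑ m ∈ Finset.range (n - k - j), j ^ m * Nat.choose (k + m) k * S2 (n - 1 - k - m) j

/-- The triple-indexed array ε(n,k,j) of the paper. -/
def eps (n k j : ℕ) : ℕ :=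
  if 1 ≤ n ∧ k ≤ n ∧ j = n - k then 1
  else if j = 0 then 0
  else if j = 1 then Nat.choose (n - 1) k
  else ∑ m ∈ Finset.range (n - k - j + 1),
    j ^ m * Nat.choose (k + m) k * S2 (n - 1 - k - m) (j - 1)

-- basic value lemmas
lemma S2_of_lt : ∀ {n m}, n < m → S2 n m = 0
  | 0, m + 1, _ => rfl
  | n + 1, m + 1, h => by
      simp [S2, S2_of_lt (by omega : n < m), S2_of_lt (by omega : n < m + 1)]

lemma S2_self : ∀ n, S2 n n = 1
  | 0 => rfl
  | n + 1 => by simp [S2, S2_self n, S2_of_lt (by omega : n < n + 1)]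

lemma s1_of_lt : ∀ {n m}, n < m → s1 n m = 0
  | 0, m + 1, _ => rfl
  | n + 1, m + 1, h => by
      rw [show s1 (n+1) (m+1) = s1 n m - (n:ℤ) * s1 n (m+1) from rfl,
        s1_of_lt (by omega : n < m), s1_of_lt (by omega : n < m + 1)]
      ring

lemma s1_succ_zero : ∀ n, s1 (n + 1) 0 = 0
  | 0 => by simp [s1]
  | n + 1 => by rw [show s1 (n+2) 0 = -(n+1 : ℤ) * s1 (n+1) 0 from rfl, s1_succ_zero n]; ring

lemma s1_self : ∀ n, s1 n n = 1
  | 0 => rfl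
  | n + 1 => by
      rw [show s1 (n+1) (n+1) = s1 n n - (n:ℤ) * s1 n (n+1) from rfl, s1_self n,
        s1_of_lt (by omega)]
      ring


lemma zeta_zero (j k : ℕ) : zeta j k 0 = if j = k + 1 then 1 else 0 := by
  simp [zeta]

lemma zeta_one (j k : ℕ) : zeta j k 1 = (j - 1).choose (k + 1) := by
  simp [zeta]

lemma zeta_sum (j k q : ℕ) :
    zeta j k (q + 2) =
      ∑ m ∈ Finset.range (j - k - (q + 2)),
        (q + 2) ^ m * (k + m).choose k * S2 (j - 1 - k - m) (q + 2) := by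
  simp [zeta]

lemma eps_zero (j k : ℕ) : eps j k 0 = if j = k ∧ 1 ≤ j then 1 else 0 := by
  unfold eps
  by_cases h : j = k ∧ 1 ≤ j
  · obtain ⟨rfl, hj⟩ := h
    simp [hj]
  · rw [if_neg (by omega), if_pos rfl, if_neg h]

lemma eps_one (j k : ℕ) : eps j k 1 = (j - 1).choose k := by
  unfold eps
  by_cases h1 : 1 ≤ j ∧ k ≤ j ∧ 1 = j - k
  · rw [if_pos h1]
    have : j - 1 = k := by omega
    rw [this, Nat.choose_self]
  · rw [if_neg h1, if_neg one_ne_zero, if_pos rfl]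

lemma eps_sum (j k q : ℕ) :
    eps j k (q + 2) =
      ∑ m ∈ Finset.range (j - k - (q + 2) + 1),
        (q + 2) ^ m * (k + m).choose k * S2 (j - 1 - k - m) (q + 1) := by
  unfold eps
  by_cases h1 : 1 ≤ j ∧ k ≤ j ∧ q + 2 = j - k
  · rw [if_pos h1]
    have h4 : j - k - (q + 2) = 0 := by omega
    have h5 : j - 1 - k = q + 1 := by omega
    rw [h4, Finset.sum_range_one]
    simp [h5, S2_self]
  · rw [if_neg h1, if_neg (by omega), if_neg (by omega)]
    norm_num

lemma S2_succ_succ (n k : ℕ) : S2 (n + 1) (k + 1) = S2 n k + (k + 1) * S2 n (k + 1) := rfl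

lemma zeta_rec (j k p : ℕ) (hj : 1 ≤ j) :
    zeta (j + 1) k p = p * zeta j k p + eps j k p := by
  match p with
  | 0 =>
    rw [zeta_zero, zeta_zero, eps_zero]
    split_ifs <;> omega
  | 1 =>
    rw [zeta_one, zeta_one, eps_one]
    obtain ⟨i, rfl⟩ : ∃ i, j = i + 1 := ⟨j - 1, by omega⟩
    simp [Nat.choose_succ_succ]
    ring
  | q + 2 =>
    rw [zeta_sum, zeta_sum, eps_sum]
    rcases Nat.lt_or_ge j (k + (q + 2)) with h | h
    · have e1 : j + 1 - k - (q + 2) = 0 := by omega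
      have e2 : j - k - (q + 2) = 0 := by omega
      rw [e1, e2]
      simp only [Finset.range_zero, Finset.sum_empty, Nat.mul_zero, Nat.zero_add,
        Finset.sum_range_one]
      rw [S2_of_lt (by omega : j - 1 - k - 0 < q + 1)]
      simp
    · obtain ⟨t, rfl⟩ : ∃ t, j = k + (q + 2) + t := ⟨j - (k + (q + 2)), by omega⟩
      have e1 : k + (q + 2) + t + 1 - k - (q + 2) = t + 1 := by omega
      have e2 : k + (q + 2) + t - k - (q + 2) = t := by omega
      rw [e1, e2]
      have key : ∀ m ∈ Finset.range (t + 1),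
          (q + 2) ^ m * (k + m).choose k * S2 (k + (q + 2) + t + 1 - 1 - k - m) (q + 2)
          = ((q + 2) * ((q + 2) ^ m * (k + m).choose k *
              S2 (k + (q + 2) + t - 1 - k - m) (q + 2)))
            + (q + 2) ^ m * (k + m).choose k * S2 (k + (q + 2) + t - 1 - k - m) (q + 1) := by
        intro m hm
        have hm' : m ≤ t := by simp at hm; omega
        have a1 : k + (q + 2) + t + 1 - 1 - k - m = (q + 1 + (t - m)) + 1 := by omega
        have a2 : k + (q + 2) + t - 1 - k - m = q + 1 + (t - m) := by omega
        rw [a1, a2, show S2 (q + 1 + (t - m) + 1) (q + 2)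
          = S2 (q + 1 + (t - m)) (q + 1) + (q + 2) * S2 (q + 1 + (t - m)) (q + 2) from rfl]
        ring
      rw [Finset.sum_congr rfl key, Finset.sum_add_distrib, ← Finset.mul_sum]
      congr 2
      rw [Finset.sum_range_succ, S2_of_lt (by omega : k + (q+2) + t - 1 - k - t < q + 2)]
      simp

lemma eps_rec (j k p : ℕ) (hj : 1 ≤ j) :
    eps (j + 1) (k + 1) p = eps j k p + p * eps j (k + 1) p := by
  match p with
  | 0 =>
    rw [eps_zero, eps_zero, eps_zero]
    split_ifs <;> omega
  | 1 =>
    rw [eps_one, eps_one, eps_one]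
    obtain ⟨i, rfl⟩ : ∃ i, j = i + 1 := ⟨j - 1, by omega⟩
    simp [Nat.choose_succ_succ]
  | q + 2 =>
    rw [eps_sum, eps_sum, eps_sum]
    rcases Nat.lt_or_ge j (k + (q + 2)) with h | h
    · have e1 : j + 1 - (k + 1) - (q + 2) + 1 = 1 := by omega
      have e2 : j - k - (q + 2) + 1 = 1 := by omega
      have e3 : j - (k + 1) - (q + 2) + 1 = 1 := by omega
      rw [e1, e2, e3]
      simp only [Finset.sum_range_one]
      rw [S2_of_lt (by omega : j + 1 - 1 - (k + 1) - 0 < q + 1),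
        S2_of_lt (by omega : j - 1 - k - 0 < q + 1),
        S2_of_lt (by omega : j - 1 - (k + 1) - 0 < q + 1)]
      simp
    · obtain ⟨t, rfl⟩ : ∃ t, j = k + (q + 2) + t := ⟨j - (k + (q + 2)), by omega⟩
      rcases Nat.eq_zero_or_pos t with rfl | ht
      · have e1 : k + (q + 2) + 0 + 1 - (k + 1) - (q + 2) + 1 = 1 := by omega
        have e2 : k + (q + 2) + 0 - k - (q + 2) + 1 = 1 := by omega
        have e3 : k + (q + 2) + 0 - (k + 1) - (q + 2) + 1 = 1 := by omega
        rw [e1, e2, e3]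
        simp only [Finset.sum_range_one]
        rw [show k + (q + 2) + 0 + 1 - 1 - (k + 1) - 0 = q + 1 by omega,
          show k + (q + 2) + 0 - 1 - k - 0 = q + 1 by omega,
          show k + (q + 2) + 0 - 1 - (k + 1) - 0 = q by omega,
          S2_self, S2_of_lt (by omega : q < q + 1)]
        simp
      · set j := k + (q + 2) + t with hje
        have e1 : j + 1 - (k + 1) - (q + 2) + 1 = t + 1 := by omega
        have e2 : j - k - (q + 2) + 1 = t + 1 := by omega
        have e3 : j - (k + 1) - (q + 2) + 1 = t := by omega
        rw [e1, e2, e3]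
        have key : ∀ m ∈ Finset.range (t + 1),
            (q + 2) ^ m * (k + 1 + m).choose (k + 1) * S2 (j + 1 - 1 - (k + 1) - m) (q + 1)
            = (q + 2) ^ m * (k + m).choose k * S2 (j - 1 - k - m) (q + 1)
              + (q + 2) ^ m * (k + m).choose (k + 1) * S2 (q + 1 + (t - m)) (q + 1) := by
          intro m hm
          have hm' : m ≤ t := by simp at hm; omega
          rw [show j + 1 - 1 - (k + 1) - m = q + 1 + (t - m) by omega,
            show j - 1 - k - m = q + 1 + (t - m) by omega,
            show k + 1 + m = (k + m) + 1 by omega, Nat.choose_succ_succ]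
          ring
        rw [Finset.sum_congr rfl key, Finset.sum_add_distrib]
        congr 1
        rw [Finset.sum_range_succ', Finset.mul_sum]
        rw [show (k + 0).choose (k + 1) = 0 from Nat.choose_eq_zero_of_lt (by omega)]
        simp only [mul_zero, zero_mul, add_zero, pow_zero, one_mul]
        refine Finset.sum_congr rfl fun i hi => ?_
        have hi' : i < t := by simpa using hi
        rw [show q + 1 + (t - (i + 1)) = j - 1 - (k + 1) - i by omega,
          show k + (i + 1) = k + 1 + i by omega, pow_succ]
        ring

lemma eps_rec0 (j p : ℕ) (hj : 1 ≤ j) :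
    eps (j + 1) 0 (p + 1) = S2 j p + (p + 1) * eps j 0 (p + 1) := by
  match p with
  | 0 =>
    obtain ⟨i, rfl⟩ : ∃ i, j = i + 1 := ⟨j - 1, by omega⟩
    rw [eps_one, eps_one]
    simp [S2]
  | q + 1 =>
    rw [eps_sum, eps_sum]
    rcases Nat.lt_or_ge j (q + 2) with h | h
    · have e1 : j + 1 - 0 - (q + 2) + 1 = 1 := by omega
      have e2 : j - 0 - (q + 2) + 1 = 1 := by omega
      rw [e1, e2]
      simp only [Finset.sum_range_one]
      rw [S2_of_lt (by omega : j - 1 - 0 - 0 < q + 1)]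
      simp [show j + 1 - 1 - 0 - 0 = j by omega]
    · obtain ⟨t, rfl⟩ : ∃ t, j = q + 2 + t := ⟨j - (q + 2), by omega⟩
      set j := q + 2 + t with hje
      have e1 : j + 1 - 0 - (q + 2) + 1 = t + 2 := by omega
      have e2 : j - 0 - (q + 2) + 1 = t + 1 := by omega
      rw [e1, e2, Finset.sum_range_succ', Finset.mul_sum]
      have : ((q:ℕ) + 1 + 1) ^ 0 * (0 + 0).choose 0 * S2 (j + 1 - 1 - 0 - 0) (q + 1)
          = S2 j (q + 1) := by simp
      rw [this, add_comm]
      congr 1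
      refine Finset.sum_congr rfl fun i hi => ?_
      rw [show j + 1 - 1 - 0 - (i + 1) = j - 1 - 0 - i by omega, pow_succ]
      simp
      ring

lemma zeta_vanish (j k p : ℕ) (h : j < p + k) : zeta j k p = 0 := by
  match p with
  | 0 => rw [zeta_zero, if_neg (by omega)]
  | 1 => rw [zeta_one, Nat.choose_eq_zero_of_lt (by omega)]
  | q + 2 => rw [zeta_sum, show j - k - (q + 2) = 0 by omega]; simp

lemma zeta_top (k p : ℕ) (hp : 1 ≤ p) : zeta (p + k) k p = 0 := by
  match p, hp with
  | 1, _ => rw [zeta_one, Nat.choose_eq_zero_of_lt (by omega)]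
  | q + 2, _ => rw [zeta_sum, show q + 2 + k - k - (q + 2) = 0 by omega]; simp

lemma zeta_top1 (k p : ℕ) : zeta (p + k + 1) k p = 1 := by
  match p with
  | 0 => rw [zeta_zero, if_pos (by omega)]
  | 1 => rw [zeta_one, show 1 + k + 1 - 1 = k + 1 by omega, Nat.choose_self]
  | q + 2 =>
    rw [zeta_sum, show q + 2 + k + 1 - k - (q + 2) = 1 by omega, Finset.sum_range_one,
      show q + 2 + k + 1 - 1 - k - 0 = q + 2 by omega, S2_self]
    simp

lemma eps_vanish (j k p : ℕ) (hj : 1 ≤ j) (h : j < p + k) : eps j k p = 0 := by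
  match p with
  | 0 => rw [eps_zero, if_neg (by omega)]
  | 1 => rw [eps_one, Nat.choose_eq_zero_of_lt (by omega)]
  | q + 2 =>
    rw [eps_sum, show j - k - (q + 2) = 0 by omega, Finset.sum_range_one,
      S2_of_lt (by omega : j - 1 - k - 0 < q + 1)]
    simp

lemma eps_top (n k p : ℕ) (h1 : 1 ≤ n) (h2 : k ≤ n) (h3 : p = n - k) : eps n k p = 1 := by
  unfold eps; rw [if_pos ⟨h1, h2, h3⟩]

lemma s1_zero_of_pos {n : ℕ} (h : 1 ≤ n) : s1 n 0 = 0 := by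
  obtain ⟨m, rfl⟩ : ∃ m, n = m + 1 := ⟨n - 1, by omega⟩
  exact s1_succ_zero m

lemma orth (n : ℕ) : ∀ m, ∑ j ∈ Finset.range (n + 1), s1 n j * (S2 j m : ℤ)
    = if n = m then 1 else 0 := by
  induction n with
  | zero => intro m; cases m <;> simp [s1, S2]
  | succ n ih =>
    intro m
    rw [Finset.sum_range_succ']
    have key : ∀ i ∈ Finset.range (n + 1), s1 (n + 1) (i + 1) * (S2 (i + 1) m : ℤ)
        = s1 n i * S2 (i + 1) m - (n : ℤ) * (s1 n (i + 1) * S2 (i + 1) m) := by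
      intro i _
      rw [show s1 (n + 1) (i + 1) = s1 n i - (n : ℤ) * s1 n (i + 1) from rfl]
      ring
    rw [Finset.sum_congr rfl key, Finset.sum_sub_distrib, ← Finset.mul_sum]
    have hB : ∑ i ∈ Finset.range (n + 1), s1 n (i + 1) * (S2 (i + 1) m : ℤ)
        = (if n = m then 1 else 0) - s1 n 0 * (S2 0 m : ℤ) := by
      have h1 : ∑ j ∈ Finset.range (n + 2), s1 n j * (S2 j m : ℤ)
          = if n = m then 1 else 0 := by
        rw [Finset.sum_range_succ, ih m, s1_of_lt (by omega : n < n + 1)]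
        ring
      rw [Finset.sum_range_succ'] at h1
      linarith
    rw [hB]
    cases m with
    | zero =>
      rw [Finset.sum_eq_zero (fun i _ => by
        rw [show S2 (i + 1) 0 = 0 from rfl]; simp)]
      rw [show s1 (n + 1) 0 = -(n : ℤ) * s1 n 0 from rfl]
      rcases Nat.eq_zero_or_pos n with rfl | hn
      · simp [s1]
      · rw [if_neg (by omega), if_neg (by omega), show (S2 0 0 : ℤ) = 1 from rfl]
        ring
    | succ m' =>
      have key2 : ∀ i ∈ Finset.range (n + 1), s1 n i * (S2 (i + 1) (m' + 1) : ℤ)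
          = s1 n i * S2 i m' + (m' + 1 : ℤ) * (s1 n i * S2 i (m' + 1)) := by
        intro i _
        rw [S2_succ_succ]
        push_cast
        ring
      rw [Finset.sum_congr rfl key2, Finset.sum_add_distrib, ← Finset.mul_sum, ih m', ih (m' + 1),
        show (S2 0 (m' + 1) : ℤ) = 0 from rfl]
      split_ifs <;> push_cast <;> omega

lemma epsId (n : ℕ) (hn : 1 ≤ n) : ∀ k p, k ≤ n → p ≤ n - k →
    ∑ j ∈ Finset.range (n + 1), s1 n j * (eps j k p : ℤ) = s1 (n - p) k := by
  induction n, hn using Nat.le_induction with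
  | base =>
    intro k p hk hp
    interval_cases k <;> interval_cases p <;>
      norm_num [Finset.sum_range_succ, s1, eps_zero, eps_one, S2]
  | succ n hn ih =>
    intro k p hk hp
    rcases Nat.eq_zero_or_pos p with rfl | hp1
    · -- p = 0
      rw [Finset.sum_eq_single k]
      · rcases Nat.eq_zero_or_pos k with rfl | hk1
        · rw [eps_zero, if_neg (by omega)]
          simp [s1_succ_zero]
        · rw [eps_zero, if_pos ⟨rfl, hk1⟩]
          simp
      · intro b _ hb
        rw [eps_zero, if_neg (by omega)]
        simp
      · intro h
        exact absurd (Finset.mem_range.2 (by omega)) h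
    · rcases Nat.lt_or_ge n (p + k) with hpk | hpk
      · -- p + k = n + 1
        have hpk' : p + k = n + 1 := by omega
        rw [Finset.sum_eq_single (n + 1)]
        · rw [s1_self, eps_top (n + 1) k p (by omega) (by omega) (by omega),
            show n + 1 - p = k by omega, s1_self]
          simp
        · intro b hb hbne
          have hb' : b < n + 1 := by simp at hb; omega
          rcases Nat.eq_zero_or_pos b with rfl | hb1
          · simp [s1_succ_zero]
          · rw [eps_vanish b k p hb1 (by omega)]
            simp
        · intro h
          exact absurd (Finset.mem_range.2 (by omega)) h
      · -- main case : p ≥ 1, p + k ≤ n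
        rw [Finset.sum_range_succ', s1_succ_zero, zero_mul, add_zero]
        have key : ∀ i ∈ Finset.range (n + 1), s1 (n + 1) (i + 1) * (eps (i + 1) k p : ℤ)
            = s1 n i * eps (i + 1) k p - (n : ℤ) * (s1 n (i + 1) * eps (i + 1) k p) := by
          intro i _
          rw [show s1 (n + 1) (i + 1) = s1 n i - (n : ℤ) * s1 n (i + 1) from rfl]
          ring
        rw [Finset.sum_congr rfl key, Finset.sum_sub_distrib, ← Finset.mul_sum]
        have hB : ∑ i ∈ Finset.range (n + 1), s1 n (i + 1) * (eps (i + 1) k p : ℤ)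
            = s1 (n - p) k := by
          have h1 : ∑ j ∈ Finset.range (n + 2), s1 n j * (eps j k p : ℤ) = s1 (n - p) k := by
            rw [Finset.sum_range_succ, ih k p (by omega) (by omega),
              s1_of_lt (by omega : n < n + 1)]
            ring
          rw [Finset.sum_range_succ', s1_zero_of_pos hn, zero_mul, add_zero] at h1
          exact h1
        rw [hB]
        rcases Nat.eq_zero_or_pos k with rfl | hk1
        · -- k = 0
          obtain ⟨p', rfl⟩ : ∃ p', p = p' + 1 := ⟨p - 1, by omega⟩
          have key2 : ∀ i ∈ Finset.range (n + 1), s1 n i * (eps (i + 1) 0 (p' + 1) : ℤ)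
              = s1 n i * S2 i p' + (p' + 1 : ℤ) * (s1 n i * eps i 0 (p' + 1)) := by
            intro i _
            rcases Nat.eq_zero_or_pos i with rfl | hi1
            · rw [s1_zero_of_pos hn]; ring
            · rw [eps_rec0 i p' hi1]; push_cast; ring
          rw [Finset.sum_congr rfl key2, Finset.sum_add_distrib, ← Finset.mul_sum, orth n p',
            ih 0 (p' + 1) (by omega) (by omega), if_neg (by omega)]
          rw [show n + 1 - (p' + 1) = (n - (p' + 1)) + 1 by omega,
            show s1 ((n - (p' + 1)) + 1) 0 = -((n - (p' + 1) : ℕ) : ℤ) * s1 (n - (p' + 1)) 0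
              from rfl]
          push_cast [show p' + 1 ≤ n by omega]
          ring
        · -- k ≥ 1
          obtain ⟨k', rfl⟩ : ∃ k', k = k' + 1 := ⟨k - 1, by omega⟩
          have key2 : ∀ i ∈ Finset.range (n + 1), s1 n i * (eps (i + 1) (k' + 1) p : ℤ)
              = s1 n i * eps i k' p + (p : ℤ) * (s1 n i * eps i (k' + 1) p) := by
            intro i _
            rcases Nat.eq_zero_or_pos i with rfl | hi1
            · rw [s1_zero_of_pos hn]; ring
            · rw [eps_rec i k' p hi1]; push_cast; ring
          rw [Finset.sum_congr rfl key2, Finset.sum_add_distrib, ← Finset.mul_sum,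
            ih k' p (by omega) (by omega), ih (k' + 1) p (by omega) (by omega)]
          rw [show n + 1 - p = (n - p) + 1 by omega,
            show s1 ((n - p) + 1) (k' + 1) = s1 (n - p) k' - ((n - p : ℕ) : ℤ) * s1 (n - p) (k' + 1)
              from rfl]
          push_cast [show p ≤ n by omega]
          ring

lemma zetaId (n : ℕ) (hn : 1 ≤ n) : ∀ k p, k ≤ n - 1 → p ≤ n - k - 1 →
    ∑ j ∈ Finset.range (n + 1), s1 n j * (zeta j k p : ℤ) = s1 (n - p) (k + 1) := by
  induction n, hn using Nat.le_induction with
  | base =>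
    intro k p hk hp
    interval_cases k <;> interval_cases p <;>
      norm_num [Finset.sum_range_succ, s1, zeta_zero]
  | succ n hn ih =>
    intro k p hk hp
    rcases Nat.eq_zero_or_pos p with rfl | hp1
    · -- p = 0
      rw [Finset.sum_eq_single (k + 1)]
      · rw [zeta_zero, if_pos rfl]
        simp
      · intro b _ hb
        rw [zeta_zero, if_neg (by omega)]
        simp
      · intro h
        exact absurd (Finset.mem_range.2 (by omega)) h
    · rcases Nat.lt_or_ge n (p + k + 1) with hpk | hpk
      · -- p + k = n
        have hpk' : p + k = n := by omega
        rw [Finset.sum_eq_single (n + 1)]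
        · rw [s1_self, show n + 1 = p + k + 1 by omega, zeta_top1,
            show p + k + 1 - p = k + 1 by omega, s1_self]
          simp
        · intro b hb hbne
          have hb' : b < n + 1 := by simp at hb; omega
          rcases Nat.lt_or_ge b (p + k) with hblt | hbge
          · rw [zeta_vanish b k p hblt]; simp
          · rw [show b = p + k by omega, zeta_top k p hp1]; simp
        · intro h
          exact absurd (Finset.mem_range.2 (by omega)) h
      · -- main case : p ≥ 1, p + k + 1 ≤ n
        rw [Finset.sum_range_succ', s1_succ_zero, zero_mul, add_zero]
        have key : ∀ i ∈ Finset.range (n + 1), s1 (n + 1) (i + 1) * (zeta (i + 1) k p : ℤ)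
            = s1 n i * zeta (i + 1) k p - (n : ℤ) * (s1 n (i + 1) * zeta (i + 1) k p) := by
          intro i _
          rw [show s1 (n + 1) (i + 1) = s1 n i - (n : ℤ) * s1 n (i + 1) from rfl]
          ring
        rw [Finset.sum_congr rfl key, Finset.sum_sub_distrib, ← Finset.mul_sum]
        have hB : ∑ i ∈ Finset.range (n + 1), s1 n (i + 1) * (zeta (i + 1) k p : ℤ)
            = s1 (n - p) (k + 1) := by
          have h1 : ∑ j ∈ Finset.range (n + 2), s1 n j * (zeta j k p : ℤ)
              = s1 (n - p) (k + 1) := by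
            rw [Finset.sum_range_succ, ih k p (by omega) (by omega),
              s1_of_lt (by omega : n < n + 1)]
            ring
          rw [Finset.sum_range_succ', s1_zero_of_pos hn, zero_mul, add_zero] at h1
          exact h1
        rw [hB]
        have key2 : ∀ i ∈ Finset.range (n + 1), s1 n i * (zeta (i + 1) k p : ℤ)
            = (p : ℤ) * (s1 n i * zeta i k p) + s1 n i * eps i k p := by
          intro i _
          rcases Nat.eq_zero_or_pos i with rfl | hi1
          · rw [s1_zero_of_pos hn]; ring
          · rw [zeta_rec i k p hi1]; push_cast; ring
        rw [Finset.sum_congr rfl key2, Finset.sum_add_distrib, ← Finset.mul_sum,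
          ih k p (by omega) (by omega), epsId n hn k p (by omega) (by omega)]
        rw [show n + 1 - p = (n - p) + 1 by omega,
          show s1 ((n - p) + 1) (k + 1) = s1 (n - p) k - ((n - p : ℕ) : ℤ) * s1 (n - p) (k + 1)
            from rfl]
        push_cast [show p ≤ n by omega]
        ring

theorem stirling1_zeta_sum (n k p : ℕ) (hn : 1 ≤ n) (hk : k ≤ n - 1) (hp : p ≤ n - k - 1) :
    ∑ j ∈ Icc (p + k) n, s1 n j * (zeta j k p : ℤ) = s1 (n - p) (k + 1) := by
  rw [← zetaId n hn k p hk hp]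
  apply Finset.sum_subset
  · intro j hj
    simp only [Finset.mem_Icc] at hj
    exact Finset.mem_range.2 (by omega)
  · intro j hj hj2
    simp only [Finset.mem_range] at hj
    simp only [Finset.mem_Icc] at hj2
    rw [zeta_vanish j k p (by omega)]
    simp
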